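/- If P is strongly contained in Q (P ⊆ Q and ∂P ∩ ∂Q = ∅, with 0 ∈ int Q), then there exists μ < 1 and an sos representation of μ - x^T z in the quadratic module generated by the linear constraints of P × Q°; hence the semidefinite hierarchy certifies containment after finitely many steps. -/

import Mathlib

/-!
Strong containment puts the compact set `P` inside the interior of `Q`, so the gauge of `Q` is
bounded by some `ρ < 1` on `P`; hence `xᵀz ≤ ρ` on `P × Q°` and `μ - xᵀz` with `μ = (1 + ρ) / 2`
is strictly positive there. The certificate is then Putinar's Positivstellensatz for `QM(A, B)`.

That module is Archimedean: since `P` is bounded and `0 ∈ int Q`, Farkas' lemma writes every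
linear form, up to a constant, as a nonnegative combination of the generators, so every variable
is bounded modulo the module, and bounded elements form a subalgebra.

Putinar's theorem holds for an Archimedean quadratic module `M` in any commutative `ℝ`-algebra
`A`: if `f` is positive at every character nonnegative on `M`, then `f ∈ M`. Indeed, if
`-1 ∈ M - Σ² f`, then `t f = 1 + s` with `t` a sum of squares and `s ∈ M`, and a descent lowers
`λ` in `λ + f ∈ M` down to `0`. Otherwise a maximal quadratic module `Q ∌ -1` containing
`M - Σ² f` satisfies `Q ∪ -Q = A` and has support an ideal with `A ⧸ supp Q ≅ ℝ`; the quotient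
map is a character nonnegative on `M` with `f ≤ 0`.
-/

open Matrix MvPolynomial

/-- Sum of squares in ℝ[x,z] (variables indexed by `Fin d ⊕ Fin d`). -/
def IsSOS {d : ℕ} (p : MvPolynomial (Fin d ⊕ Fin d) ℝ) : Prop :=
  ∃ (n : ℕ) (h : Fin n → MvPolynomial (Fin d ⊕ Fin d) ℝ), p = ∑ i, h i ^ 2

/-! ### Cones, polytopes and gauges -/

theorem Convex.eq_univ_of_dense {V : Type*} [NormedAddCommGroup V] [NormedSpace ℝ V]
    [FiniteDimensional ℝ V] {s : Set V} (hs : Convex ℝ s) (hd : Dense s) : s = Set.univ := by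
  have hspan : affineSpan ℝ s = ⊤ := by
    refine eq_top_iff.mpr fun x _ => ?_
    exact (affineSpan ℝ s).closed_of_finiteDimensional.closure_subset_iff.mpr
      (subset_affineSpan ℝ s) (hd x)
  have := hs.interior_closure_eq_interior_of_nonempty_interior
    (hs.interior_nonempty_iff_affineSpan_eq_top.mpr hspan)
  rw [hd.closure_eq, interior_univ] at this
  exact Set.eq_univ_of_univ_subset (this ▸ interior_subset)

theorem exists_nonneg_sum_smul_eq {ι : Type*} [Fintype ι] {d : ℕ} (v : ι → Fin d → ℝ)
    (hv : ∀ y, (∀ i, v i ⬝ᵥ y ≤ 0) → y = 0) (c : Fin d → ℝ) :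
    ∃ lam : ι → ℝ, (∀ i, 0 ≤ lam i) ∧ ∑ i, lam i • v i = c := by
  classical
  set K := {y | ∃ lam : ι → ℝ, (∀ i, 0 ≤ lam i) ∧ ∑ i, lam i • v i = y}
  have hK : Convex ℝ K := by
    rintro _ ⟨l₁, hl₁, rfl⟩ _ ⟨l₂, hl₂, rfl⟩ s t hs ht -
    refine ⟨s • l₁ + t • l₂, fun i => add_nonneg (mul_nonneg hs (hl₁ i)) (mul_nonneg ht (hl₂ i)),
      ?_⟩
    simp only [Pi.add_apply, Pi.smul_apply, smul_eq_mul, add_smul, mul_smul,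
      Finset.sum_add_distrib, ← Finset.smul_sum]
  have hdense : Dense K := by
    by_contra hnd
    obtain ⟨c', hc'⟩ := (Set.ne_univ_iff_exists_notMem _).mp
      (mt dense_iff_closure_eq.mpr hnd)
    obtain ⟨f, u, hfK, hfc'⟩ := geometric_hahn_banach_closed_point (hK.closure) isClosed_closure hc'
    have hu : 0 < u := by
      simpa using hfK 0 (subset_closure ⟨0, fun _ => le_rfl, by simp⟩)
    have hfv : ∀ i, f (v i) ≤ 0 := fun i => by
      by_contra! hpos
      have hmem : (u / f (v i)) • v i ∈ K :=
        ⟨Pi.single i (u / f (v i)), fun j => by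
          rcases eq_or_ne j i with rfl | h
          · simpa using (div_pos hu hpos).le
          · simp [h],
          by simp [Pi.single_apply]⟩
      have := hfK _ (subset_closure hmem)
      rw [map_smul, smul_eq_mul, div_mul_cancel₀ _ hpos.ne'] at this
      exact lt_irrefl u this
    set y : Fin d → ℝ := fun j => f (fun j' => if j = j' then 1 else 0)
    have hfy : ∀ x, f x = x ⬝ᵥ y := fun x =>
      (f : (Fin d → ℝ) →ₗ[ℝ] ℝ).pi_apply_eq_sum_univ x
    have hy := hv y fun i => hfy (v i) ▸ hfv i
    have := hfy c'
    simp only [hy, dotProduct_zero] at this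
    linarith
  have hc : c ∈ K := hK.eq_univ_of_dense hdense ▸ Set.mem_univ c
  exact hc

theorem eq_zero_of_forall_add_smul_mem {E : Type*} [NormedAddCommGroup E] [NormedSpace ℝ E]
    {S : Set E} (hS : Bornology.IsBounded S) {x y : E} (h : ∀ t : ℝ, 0 ≤ t → x + t • y ∈ S) :
    y = 0 := by
  obtain ⟨R, hR⟩ := hS.exists_norm_le
  by_contra hy
  have hy' : 0 < ‖y‖ := norm_pos_iff.mpr hy
  set t := (R + ‖x‖ + 1) / ‖y‖
  have ht : 0 ≤ t := by have := (norm_nonneg x).trans (hR _ (by simpa using h 0 le_rfl)); positivity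
  have h₁ := hR _ (h t ht)
  have h₂ : ‖t • y‖ ≤ ‖x + t • y‖ + ‖x‖ := by
    simpa using norm_sub_le (x + t • y) x
  rw [norm_smul, Real.norm_of_nonneg ht, div_mul_cancel₀ _ hy'.ne'] at h₂
  linarith

theorem eq_zero_of_forall_dotProduct_nonpos_of_isBounded {k d : ℕ} {a : Fin k → ℝ}
    {A : Fin k → Fin d → ℝ} (hne : {x | ∀ i, 0 ≤ a i - A i ⬝ᵥ x}.Nonempty)
    (hbd : Bornology.IsBounded {x | ∀ i, 0 ≤ a i - A i ⬝ᵥ x}) {y : Fin d → ℝ}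
    (hy : ∀ i, A i ⬝ᵥ y ≤ 0) : y = 0 := by
  obtain ⟨x₀, hx₀⟩ := hne
  refine eq_zero_of_forall_add_smul_mem hbd (x := x₀) fun t ht i => ?_
  rw [dotProduct_add, dotProduct_smul, smul_eq_mul]
  linarith [hx₀ i, mul_nonpos_of_nonneg_of_nonpos ht (hy i)]

theorem isClosed_setOf_forall_le_sub_dotProduct {k d : ℕ} (a : Fin k → ℝ) (A : Fin k → Fin d → ℝ) :
    IsClosed {x | ∀ i, 0 ≤ a i - A i ⬝ᵥ x} := by
  simp only [Set.ofPred_forall]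
  exact isClosed_iInter fun i =>
    isClosed_le continuous_const (continuous_const.sub (continuous_const.dotProduct continuous_id))

theorem dotProduct_le_of_mem_convexHull {ι : Type*} {d : ℕ} {v : ι → Fin d → ℝ} {y : Fin d → ℝ}
    {c : ℝ} (h : ∀ i, v i ⬝ᵥ y ≤ c) {x : Fin d → ℝ} (hx : x ∈ convexHull ℝ (Set.range v)) :
    x ⬝ᵥ y ≤ c :=
  convexHull_min (Set.range_subset_iff.mpr h)
    (convex_halfSpace_le (f := (· ⬝ᵥ y))
      ⟨fun p q => add_dotProduct p q y, fun r p => smul_dotProduct r p y⟩ c) hx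

theorem dotProduct_le_gauge {d : ℕ} {Q : Set (Fin d → ℝ)} (hQ : Absorbent ℝ Q) {z : Fin d → ℝ}
    (h : ∀ q ∈ Q, q ⬝ᵥ z ≤ 1) (x : Fin d → ℝ) : x ⬝ᵥ z ≤ gauge Q x := by
  refine le_of_forall_gt fun a ha => ?_
  obtain ⟨b, hb, hba, q, hq, rfl⟩ := exists_lt_of_gauge_lt hQ ha
  rw [smul_dotProduct, smul_eq_mul]
  nlinarith [h q hq]

theorem IsCompact.exists_gauge_le_lt_one {E : Type*} [NormedAddCommGroup E] [NormedSpace ℝ E]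
    {Q K : Set E} (hK : IsCompact K) (hQ : Convex ℝ Q) (hQ0 : Q ∈ nhds 0)
    (hKQ : K ⊆ interior Q) : ∃ ρ < 1, ∀ x ∈ K, gauge Q x ≤ ρ := by
  rcases K.eq_empty_or_nonempty with rfl | hne
  · exact ⟨0, one_pos, by simp⟩
  obtain ⟨x₀, hx₀, hmax⟩ := hK.exists_isMaxOn hne (continuous_gauge hQ hQ0).continuousOn
  exact ⟨gauge Q x₀, interior_subset_gauge_lt_one Q (hKQ hx₀), fun x hx => hmax hx⟩

theorem subset_interior_of_frontier_inter_frontier_eq_empty {X : Type*} [TopologicalSpace X]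
    {P Q : Set X} (hPQ : P ⊆ Q) (h : frontier P ∩ frontier Q = ∅) : P ⊆ interior Q := by
  intro x hx
  by_contra hxQ
  refine h.subset ⟨⟨subset_closure hx, fun hxP => hxQ (interior_mono hPQ hxP)⟩,
    subset_closure (hPQ hx), hxQ⟩

theorem eq_zero_of_forall_dotProduct_nonpos {ι : Type*} {d : ℕ} {b : ι → Fin d → ℝ}
    (h0 : convexHull ℝ (Set.range b) ∈ nhds 0) {y : Fin d → ℝ} (hy : ∀ j, b j ⬝ᵥ y ≤ 0) :
    y = 0 := by
  obtain ⟨t, ht, -, q, hq, hqy⟩ :=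
    exists_lt_of_gauge_lt (absorbent_nhds_zero h0) (lt_add_one (gauge _ y))
  have : y ⬝ᵥ y ≤ 0 := by
    conv_lhs => arg 1; rw [← hqy]
    rw [smul_dotProduct, smul_eq_mul]
    exact mul_nonpos_of_nonneg_of_nonpos ht.le (dotProduct_le_of_mem_convexHull hy hq)
  exact dotProduct_self_eq_zero.mp (le_antisymm this (dotProduct_self_star_nonneg y))

/-! ### Quadratic modules -/

structure QuadraticModule (A : Type*) [CommRing A] extends AddSubmonoid A where
  one_mem' : (1 : A) ∈ carrier
  mul_self_mul_mem' : ∀ (a : A) {x : A}, x ∈ carrier → a * a * x ∈ carrier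

namespace QuadraticModule

section CommRing

variable {A : Type*} [CommRing A]

instance : SetLike (QuadraticModule A) A where
  coe M := M.carrier
  coe_injective M N h := by
    obtain ⟨⟨⟨_, _⟩, _⟩, _, _⟩ := M
    obtain ⟨⟨⟨_, _⟩, _⟩, _, _⟩ := N
    congr

instance : PartialOrder (QuadraticModule A) := .ofSetLike (QuadraticModule A) A

instance : AddSubmonoidClass (QuadraticModule A) A where
  add_mem {M} := M.add_mem'
  zero_mem M := M.zero_mem'

variable (M : QuadraticModule A)

theorem one_mem : (1 : A) ∈ M := M.one_mem'

theorem mul_self_mul_mem (a : A) {x : A} (hx : x ∈ M) : a * a * x ∈ M :=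
  M.mul_self_mul_mem' a hx

theorem mul_mem_of_isSumSq {s x : A} (hs : IsSumSq s) (hx : x ∈ M) : s * x ∈ M := by
  induction hs with
  | zero => simp [zero_mem M]
  | sq_add a _ ih => simpa [add_mul] using add_mem (M.mul_self_mul_mem a hx) ih

theorem mem_of_isSumSq {s : A} (hs : IsSumSq s) : s ∈ M := by
  simpa using M.mul_mem_of_isSumSq hs M.one_mem

def adjoin (p : A) : QuadraticModule A where
  carrier := {y | ∃ m ∈ M, ∃ σ, IsSumSq σ ∧ y = m + σ * p}
  zero_mem' := ⟨0, zero_mem M, 0, .zero, by simp⟩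
  add_mem' := by
    rintro _ _ ⟨m, hm, σ, hσ, rfl⟩ ⟨m', hm', σ', hσ', rfl⟩
    exact ⟨m + m', add_mem hm hm', σ + σ', hσ.add hσ', by ring⟩
  one_mem' := ⟨1, M.one_mem, 0, .zero, by simp⟩
  mul_self_mul_mem' := by
    rintro a _ ⟨m, hm, σ, hσ, rfl⟩
    exact ⟨a * a * m, M.mul_self_mul_mem a hm, a * a * σ, (IsSumSq.mul_self a).mul hσ, by ring⟩

theorem le_adjoin (p : A) : M ≤ M.adjoin p :=
  fun m hm => ⟨m, hm, 0, .zero, by simp⟩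

theorem mem_adjoin_self (p : A) : p ∈ M.adjoin p :=
  ⟨0, zero_mem M, 1, .one, by simp⟩

theorem exists_le_maximal (hM : (-1 : A) ∉ M) :
    ∃ Q, M ≤ Q ∧ Maximal (fun N : QuadraticModule A => (-1 : A) ∉ N) Q := by
  refine zorn_le_nonempty₀ {N | (-1 : A) ∉ N} (fun c hc hchain N hN => ?_) M hM
  let U : QuadraticModule A :=
    { carrier := ⋃ N ∈ c, (N : Set A)
      zero_mem' := Set.mem_biUnion hN (zero_mem N)
      add_mem' := by
        simp only [Set.mem_iUnion]
        rintro x y ⟨N₁, h₁, hx⟩ ⟨N₂, h₂, hy⟩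
        rcases hchain.total h₁ h₂ with h | h
        · exact ⟨N₂, h₂, add_mem (h hx) hy⟩
        · exact ⟨N₁, h₁, add_mem hx (h hy)⟩
      one_mem' := Set.mem_biUnion hN N.one_mem
      mul_self_mul_mem' := by
        simp only [Set.mem_iUnion]
        rintro a x ⟨N₁, h₁, hx⟩
        exact ⟨N₁, h₁, N₁.mul_self_mul_mem a hx⟩ }
  refine ⟨U, fun h => ?_, fun N' hN' x hx => Set.mem_biUnion hN' hx⟩
  obtain ⟨N', hN', h⟩ := Set.mem_iUnion₂.mp h
  exact hc hN' h

theorem neg_one_mem_adjoin_of_maximal {Q : QuadraticModule A}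
    (hQ : Maximal (fun N : QuadraticModule A => (-1 : A) ∉ N) Q) {p : A} (hp : p ∉ Q) :
    (-1 : A) ∈ Q.adjoin p := by
  by_contra h
  exact hp (hQ.2 h (Q.le_adjoin p) (Q.mem_adjoin_self p))

def generated {κ : Type*} [Fintype κ] (g : κ → A) : QuadraticModule A where
  carrier := {p | ∃ (σ₀ : A) (σ : κ → A), IsSumSq σ₀ ∧ (∀ i, IsSumSq (σ i)) ∧ p = σ₀ + ∑ i, σ i * g i}
  zero_mem' := ⟨0, 0, .zero, fun _ => .zero, by simp⟩
  add_mem' := by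
    rintro _ _ ⟨σ₀, σ, h₀, h, rfl⟩ ⟨τ₀, τ, h₀', h', rfl⟩
    refine ⟨σ₀ + τ₀, σ + τ, h₀.add h₀', fun i => (h i).add (h' i), ?_⟩
    simp only [Pi.add_apply, add_mul, Finset.sum_add_distrib]
    ring
  one_mem' := ⟨1, 0, .one, fun _ => .zero, by simp⟩
  mul_self_mul_mem' := by
    rintro a _ ⟨σ₀, σ, h₀, h, rfl⟩
    refine ⟨a * a * σ₀, fun i => a * a * σ i, (IsSumSq.mul_self a).mul h₀,
      fun i => (IsSumSq.mul_self a).mul (h i), ?_⟩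
    simp only [mul_add, Finset.mul_sum, mul_assoc]

theorem generator_mem {κ : Type*} [Fintype κ] (g : κ → A) (i : κ) : g i ∈ generated g := by
  classical
  refine ⟨0, Pi.single i 1, .zero, fun j => ?_, by simp [Pi.single_apply]⟩
  rcases eq_or_ne j i with rfl | h <;> simp [*]

end CommRing

section RealAlgebra

variable {A : Type*} [CommRing A] [Algebra ℝ A] (M : QuadraticModule A)

theorem algebraMap_mem {c : ℝ} (hc : 0 ≤ c) : algebraMap ℝ A c ∈ M := by
  have h := M.mul_self_mul_mem (algebraMap ℝ A √c) M.one_mem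
  rwa [mul_one, ← map_mul, Real.mul_self_sqrt hc] at h

theorem smul_mem {c : ℝ} (hc : 0 ≤ c) {x : A} (hx : x ∈ M) : c • x ∈ M := by
  have h := M.mul_self_mul_mem (algebraMap ℝ A √c) hx
  rwa [← map_mul, Real.mul_self_sqrt hc, ← Algebra.smul_def] at h

theorem algebraMap_mem_iff (hM : (-1 : A) ∉ M) {c : ℝ} : algebraMap ℝ A c ∈ M ↔ 0 ≤ c := by
  refine ⟨fun h => ?_, M.algebraMap_mem⟩
  by_contra hc
  refine hM ?_
  have := M.smul_mem (inv_nonneg.mpr (neg_nonneg.mpr (not_le.mp hc).le)) h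
  rwa [Algebra.smul_def, ← map_mul, inv_mul_eq_div, div_neg, div_self (ne_of_not_le hc).symm,
    map_neg, map_one] at this

/-- `M ∩ -M`, an ideal because `4yx = (y + 1)²x + (y - 1)²(-x)`. -/
def support : Ideal A where
  carrier := {x | x ∈ M ∧ -x ∈ M}
  zero_mem' := by simp [zero_mem M]
  add_mem' := by
    rintro x y ⟨hx, hnx⟩ ⟨hy, hny⟩
    exact ⟨add_mem hx hy, by simpa [add_comm] using add_mem hnx hny⟩
  smul_mem' := by
    have half : algebraMap ℝ A 2⁻¹ * algebraMap ℝ A 2⁻¹ * 4 = 1 := by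
      rw [← map_mul, ← map_ofNat (algebraMap ℝ A) 4, ← map_mul]
      norm_num
    have key : ∀ y {x : A}, x ∈ M → -x ∈ M → y * x ∈ M := fun y x hx hnx => by
      have h := add_mem (M.mul_self_mul_mem (algebraMap ℝ A 2⁻¹ * (y + 1)) hx)
        (M.mul_self_mul_mem (algebraMap ℝ A 2⁻¹ * (y - 1)) hnx)
      convert h using 1
      linear_combination (-(y * x)) * half
    rintro y x ⟨hx, hnx⟩
    exact ⟨key y hx hnx, by simpa using key y hnx (by simpa using hx)⟩

def IsArchimedean : Prop := ∀ p : A, ∃ r : ℝ, algebraMap ℝ A r - p ∈ M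

theorem IsArchimedean.mono {M N : QuadraticModule A} (hMN : M ≤ N) (hM : M.IsArchimedean) :
    N.IsArchimedean :=
  fun p => (hM p).imp fun _ h => hMN h

theorem algebraMap_sub_mem_of_le {r s : ℝ} (hrs : r ≤ s) {p : A} (hp : algebraMap ℝ A r - p ∈ M) :
    algebraMap ℝ A s - p ∈ M := by
  have := add_mem (M.algebraMap_mem (sub_nonneg.mpr hrs)) hp
  rwa [map_sub, sub_add_sub_cancel] at this

theorem exists_sub_mul_self_mem {r : ℝ} {p : A} (h₁ : algebraMap ℝ A r - p ∈ M)
    (h₂ : algebraMap ℝ A r + p ∈ M) : ∃ R : ℝ, 0 ≤ R ∧ algebraMap ℝ A R - p * p ∈ M := by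
  set s := max r 1
  have hs : 0 < s := lt_max_of_lt_right one_pos
  have h₁' := M.algebraMap_sub_mem_of_le (le_max_left r 1) h₁
  have h₂' := M.algebraMap_sub_mem_of_le (le_max_left r 1) (p := -p) (by rwa [sub_neg_eq_add])
  rw [sub_neg_eq_add] at h₂'
  refine ⟨s * s, mul_self_nonneg s, ?_⟩
  -- `(s + p)²(s - p) + (s - p)²(s + p) = 2s(s² - p²)`
  have hinv : algebraMap ℝ A (2 * s)⁻¹ * (2 * algebraMap ℝ A s) = 1 := by
    rw [← map_ofNat (algebraMap ℝ A) 2, ← map_mul, ← map_mul, inv_mul_cancel₀ (by positivity),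
      map_one]
  have := M.smul_mem (inv_nonneg.mpr (mul_nonneg zero_le_two hs.le))
    (add_mem (M.mul_self_mul_mem (algebraMap ℝ A s + p) h₁')
      (M.mul_self_mul_mem (algebraMap ℝ A s - p) h₂'))
  convert this using 1
  rw [Algebra.smul_def, map_mul]
  linear_combination (-(algebraMap ℝ A s * algebraMap ℝ A s - p * p)) * hinv

def boundedSubalgebra : Subalgebra ℝ A where
  carrier := {p | ∃ r : ℝ, algebraMap ℝ A r - p ∈ M ∧ algebraMap ℝ A r + p ∈ M}
  algebraMap_mem' c := ⟨|c|, by rw [← map_sub]; exact M.algebraMap_mem (by linarith [le_abs_self c]),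
    by rw [← map_add]; exact M.algebraMap_mem (by linarith [neg_abs_le c])⟩
  add_mem' := by
    rintro p q ⟨r, hr₁, hr₂⟩ ⟨s, hs₁, hs₂⟩
    refine ⟨r + s, ?_, ?_⟩
    · convert add_mem hr₁ hs₁ using 1; rw [map_add]; ring
    · convert add_mem hr₂ hs₂ using 1; rw [map_add]; ring
  mul_mem' := by
    rintro p q ⟨r, hr₁, hr₂⟩ ⟨s, hs₁, hs₂⟩
    have hrs : algebraMap ℝ A (r + s) = algebraMap ℝ A r + algebraMap ℝ A s := map_add _ r s
    obtain ⟨R₁, hR₁, h₁⟩ := M.exists_sub_mul_self_mem (r := r + s) (p := p + q)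
      (by convert add_mem hr₁ hs₁ using 1; rw [hrs]; ring)
      (by convert add_mem hr₂ hs₂ using 1; rw [hrs]; ring)
    obtain ⟨R₂, hR₂, h₂⟩ := M.exists_sub_mul_self_mem (r := r + s) (p := p - q)
      (by convert add_mem hr₁ hs₂ using 1; rw [hrs]; ring)
      (by convert add_mem hr₂ hs₁ using 1; rw [hrs]; ring)
    have hq : algebraMap ℝ A 4⁻¹ * 4 = 1 := by
      rw [← map_ofNat (algebraMap ℝ A) 4, ← map_mul, inv_mul_cancel₀ four_ne_zero, map_one]
    -- `4pq = (p + q)² - (p - q)²`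
    refine ⟨4⁻¹ * (R₁ + R₂), ?_, ?_⟩
    · convert M.smul_mem (inv_nonneg.mpr zero_le_four)
        (add_mem (add_mem h₁ (M.mem_of_isSumSq (.mul_self (p - q)))) (M.algebraMap_mem hR₂))
        using 1
      rw [Algebra.smul_def, map_mul, map_add]
      linear_combination (p * q) * hq
    · convert M.smul_mem (inv_nonneg.mpr zero_le_four)
        (add_mem (add_mem h₂ (M.mem_of_isSumSq (.mul_self (p + q)))) (M.algebraMap_mem hR₁))
        using 1
      rw [Algebra.smul_def, map_mul, map_add]
      linear_combination (-(p * q)) * hq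

theorem isArchimedean_of_adjoin_eq_top {s : Set A} (hs : Algebra.adjoin ℝ s = ⊤)
    (h : ∀ x ∈ s, ∃ r : ℝ, algebraMap ℝ A r - x ∈ M ∧ algebraMap ℝ A r + x ∈ M) :
    M.IsArchimedean := by
  have : M.boundedSubalgebra = ⊤ := eq_top_iff.mpr (hs ▸ Algebra.adjoin_le h)
  intro p
  obtain ⟨r, hr, -⟩ := this ▸ Algebra.mem_top (x := p)
  exact ⟨r, hr⟩

theorem exists_bounds_of_affine_mem {ι : Type*} [Fintype ι] {d : ℕ} {a : ι → ℝ}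
    {V : ι → Fin d → ℝ} {x : Fin d → A} (hg : ∀ i, algebraMap ℝ A (a i) - ∑ j, V i j • x j ∈ M)
    (hV : ∀ y, (∀ i, V i ⬝ᵥ y ≤ 0) → y = 0) (j : Fin d) :
    ∃ r : ℝ, algebraMap ℝ A r - x j ∈ M ∧ algebraMap ℝ A r + x j ∈ M := by
  have hlin (c : Fin d → ℝ) : ∃ r : ℝ, algebraMap ℝ A r - ∑ j, c j • x j ∈ M := by
    obtain ⟨lam, hlam, rfl⟩ := exists_nonneg_sum_smul_eq V hV c
    refine ⟨∑ i, lam i * a i, ?_⟩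
    convert sum_mem fun i _ => M.smul_mem (hlam i) (hg i) using 1
    simp only [Finset.sum_apply, Pi.smul_apply, smul_eq_mul, Finset.sum_smul, mul_smul, smul_sub,
      Finset.smul_sum, Finset.sum_sub_distrib, map_sum, map_mul, ← Algebra.smul_def]
    rw [Finset.sum_comm]
  obtain ⟨r₁, h₁⟩ := hlin (Pi.single j 1)
  obtain ⟨r₂, h₂⟩ := hlin (-Pi.single j 1)
  simp only [Pi.neg_apply, neg_smul, Finset.sum_neg_distrib, sub_neg_eq_add, Pi.single_apply,
    ite_smul, one_smul, zero_smul, Finset.sum_ite_eq', Finset.mem_univ, if_true] at h₁ h₂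
  refine ⟨max r₁ r₂, M.algebraMap_sub_mem_of_le (le_max_left r₁ r₂) h₁, ?_⟩
  simpa using M.algebraMap_sub_mem_of_le (le_max_right r₁ r₂) (p := -x j) (by simpa using h₂)

theorem algebraMap_sub_add_mem_of_mul_eq_one_add {t s f : A} (ht : IsSumSq t) (hs : s ∈ M)
    (htf : t * f = 1 + s) {c₁ c₂ lam δ : ℝ} (hc₁ : algebraMap ℝ A c₁ - (t + t * s) ∈ M)
    (hc₂ : algebraMap ℝ A c₂ - t * t ∈ M) (hlam : 0 ≤ lam) (hδ : 0 ≤ δ)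
    (hδc : (c₁ + lam * c₂) * δ ≤ 1) (hf : algebraMap ℝ A lam + f ∈ M) :
    algebraMap ℝ A (lam - δ) + f ∈ M := by
  set c := c₁ + lam * c₂
  have hst : s + lam • t ∈ M := add_mem hs (M.smul_mem hlam (M.mem_of_isSumSq ht))
  have hbound : algebraMap ℝ A c - (t + t * s + lam • (t * t)) ∈ M := by
    convert add_mem hc₁ (M.smul_mem hlam hc₂) using 1
    simp only [c, Algebra.smul_def, map_add, map_mul]
    ring
  -- `(1 - δt)²(f + λ) + 2δ(s + λt) + δ²(c - t - ts - λt²) = f + λ - 2δ + cδ²`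
  have key := add_mem (add_mem (M.mul_self_mul_mem (1 - algebraMap ℝ A δ * t) hf)
    (M.smul_mem (by positivity : (0 : ℝ) ≤ 2 * δ) hst))
    (M.smul_mem (by positivity : (0 : ℝ) ≤ δ * δ) hbound)
  have hgap : 0 ≤ δ - c * δ * δ := by nlinarith
  convert add_mem key (M.algebraMap_mem hgap) using 1
  simp only [Algebra.smul_def, map_sub, map_mul, map_ofNat]
  linear_combination (2 * algebraMap ℝ A δ - algebraMap ℝ A δ * algebraMap ℝ A δ * t) * htf

theorem mem_of_mul_eq_one_add (hM : M.IsArchimedean) {t s f : A} (ht : IsSumSq t) (hs : s ∈ M)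
    (htf : t * f = 1 + s) : f ∈ M := by
  by_contra hf
  set S := {lam : ℝ | algebraMap ℝ A lam + f ∈ M}
  have hpos : ∀ lam ∈ S, 0 < lam := fun lam hlam => by
    by_contra hle
    refine hf ?_
    simpa using add_mem hlam (M.algebraMap_mem (neg_nonneg.mpr (not_lt.mp hle)))
  obtain ⟨lam₀, hlam₀⟩ : ∃ lam₀, lam₀ ∈ S := by
    obtain ⟨r, hr⟩ := hM (-f)
    exact ⟨r, by rwa [sub_neg_eq_add] at hr⟩
  obtain ⟨c₁, hc₁⟩ := hM (t + t * s)
  obtain ⟨c₂, hc₂⟩ := hM (t * t)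
  have hc₂' := M.algebraMap_sub_mem_of_le (le_max_left c₂ 0) hc₂
  set δ := (|c₁ + lam₀ * max c₂ 0| + 1)⁻¹
  have hδ : 0 < δ := by positivity
  have hδc : (c₁ + lam₀ * max c₂ 0) * δ ≤ 1 := by
    rw [← div_eq_mul_inv, div_le_one (by positivity)]
    linarith [le_abs_self (c₁ + lam₀ * max c₂ 0)]
  have hbdd : BddBelow S := ⟨0, fun lam hlam => (hpos lam hlam).le⟩
  obtain ⟨lam, hlam, hlt⟩ := exists_lt_of_csInf_lt ⟨lam₀, hlam₀⟩ (lt_add_of_pos_right (sInf S) hδ)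
  have hmin : min lam lam₀ ∈ S := by
    rcases min_choice lam lam₀ with h | h <;> rw [h] <;> assumption
  -- a level within `δ` of `sInf S` can be lowered by `δ`, below `sInf S`
  have hstep : min lam lam₀ - δ ∈ S := by
    refine M.algebraMap_sub_add_mem_of_mul_eq_one_add ht hs htf hc₁ hc₂' (hpos _ hmin).le hδ.le
      (le_trans ?_ hδc) hmin
    gcongr
    exact min_le_right lam lam₀
  linarith [csInf_le hbdd hstep, min_le_left lam lam₀]

section Maximal

variable {Q : QuadraticModule A} (hQ : Maximal (fun N : QuadraticModule A => (-1 : A) ∉ N) Q)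
include hQ

theorem mem_or_neg_mem_of_maximal (p : A) : p ∈ Q ∨ -p ∈ Q := by
  by_contra! h
  obtain ⟨q₁, hq₁, σ₁, hσ₁, e₁⟩ := neg_one_mem_adjoin_of_maximal hQ h.1
  obtain ⟨q₂, hq₂, σ₂, hσ₂, e₂⟩ := neg_one_mem_adjoin_of_maximal hQ h.2
  -- `-σ₁ = σ₂ + σ₂ q₁ + σ₁ q₂`
  have hσ₁ : σ₁ ∈ Q.support := by
    refine ⟨Q.mem_of_isSumSq hσ₁, ?_⟩
    convert add_mem (add_mem (Q.mem_of_isSumSq hσ₂) (Q.mul_mem_of_isSumSq hσ₂ hq₁))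
      (Q.mul_mem_of_isSumSq hσ₁ hq₂) using 1
    linear_combination σ₂ * e₁ + σ₁ * e₂
  refine hQ.prop ?_
  rw [e₁, mul_comm]
  exact add_mem hq₁ (Q.support.mul_mem_left p hσ₁).1

theorem neg_mem_of_maximal_of_forall_pos (harch : Q.IsArchimedean) {u : A}
    (h : ∀ ε : ℝ, 0 < ε → algebraMap ℝ A ε - u ∈ Q) : -u ∈ Q := by
  by_contra hu
  obtain ⟨q, hq, σ, hσ, e⟩ := neg_one_mem_adjoin_of_maximal hQ hu
  obtain ⟨N, hN⟩ := harch σ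
  set ε := (|N| + 1)⁻¹
  have hε : 0 < ε := by positivity
  -- `σ(ε - u) + q + ε(N - σ) = εN - 1`
  have := add_mem (add_mem (Q.mul_mem_of_isSumSq hσ (h ε hε)) hq) (Q.smul_mem hε.le hN)
  have hmem : algebraMap ℝ A (ε * N - 1) ∈ Q := by
    convert this using 1
    simp only [Algebra.smul_def, map_sub, map_mul, map_one]
    linear_combination e
  have hεN : ε * N < 1 := by
    rw [← div_eq_inv_mul, div_lt_one (by positivity)]
    linarith [le_abs_self N]
  linarith [(Q.algebraMap_mem_iff hQ.prop).mp hmem]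

theorem exists_sub_algebraMap_mem_support_of_maximal (harch : Q.IsArchimedean) (p : A) :
    ∃ r : ℝ, p - algebraMap ℝ A r ∈ Q.support := by
  set S := {r : ℝ | algebraMap ℝ A r - p ∈ Q}
  have hne : S.Nonempty := harch p
  have hbdd : BddBelow S := by
    obtain ⟨s, hs⟩ := harch (-p)
    refine ⟨-s, fun r hr => ?_⟩
    have : algebraMap ℝ A (r + s) ∈ Q := by
      convert add_mem hr hs using 1
      rw [map_add]
      ring
    linarith [(Q.algebraMap_mem_iff hQ.prop).mp this]
  refine ⟨sInf S, ?_, ?_⟩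
  · rw [← neg_sub]
    refine neg_mem_of_maximal_of_forall_pos hQ harch fun ε hε => ?_
    have hnot : sInf S - ε ∉ S := fun h => by linarith [csInf_le hbdd h]
    convert (mem_or_neg_mem_of_maximal hQ (algebraMap ℝ A (sInf S - ε) - p)).resolve_left hnot
      using 1
    rw [map_sub]
    ring
  · refine neg_mem_of_maximal_of_forall_pos hQ harch fun ε hε => ?_
    obtain ⟨r, hr, hlt⟩ := exists_lt_of_csInf_lt hne (lt_add_of_pos_right (sInf S) hε)
    convert Q.algebraMap_sub_mem_of_le hlt.le hr using 1
    rw [map_add]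
    ring

theorem exists_algHom_nonneg_of_maximal (harch : Q.IsArchimedean) :
    ∃ φ : A →ₐ[ℝ] ℝ, ∀ p ∈ Q, 0 ≤ φ p := by
  have : Nontrivial (A ⧸ Q.support) := Ideal.Quotient.nontrivial_iff.mpr fun h => hQ.prop <| by
    simpa using ((Q.support.eq_top_iff_one).mp h).2
  have hmk (p : A) (r : ℝ) (h : p - algebraMap ℝ A r ∈ Q.support) :
      Ideal.Quotient.mk Q.support p = algebraMap ℝ _ r :=
    Ideal.Quotient.eq.mpr h
  let e := AlgEquiv.ofBijective (Algebra.ofId ℝ (A ⧸ Q.support))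
    ⟨(algebraMap ℝ _).injective, fun x => by
      obtain ⟨p, rfl⟩ := Ideal.Quotient.mk_surjective x
      obtain ⟨r, hr⟩ := exists_sub_algebraMap_mem_support_of_maximal hQ harch p
      exact ⟨r, (hmk p r hr).symm⟩⟩
  refine ⟨e.symm.toAlgHom.comp (Ideal.Quotient.mkₐ ℝ Q.support), fun p hp => ?_⟩
  obtain ⟨r, hr⟩ := exists_sub_algebraMap_mem_support_of_maximal hQ harch p
  have hφ : e.symm (Ideal.Quotient.mk Q.support p) = r :=
    e.symm_apply_eq.mpr (hmk p r hr)
  have := add_mem hr.2 hp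
  rw [neg_sub, sub_add_cancel, Q.algebraMap_mem_iff hQ.prop] at this
  simpa [hφ] using this

end Maximal

theorem mem_of_forall_algHom_pos (hM : M.IsArchimedean) {f : A}
    (hf : ∀ φ : A →ₐ[ℝ] ℝ, (∀ p ∈ M, 0 ≤ φ p) → 0 < φ f) : f ∈ M := by
  by_cases h : (-1 : A) ∈ M.adjoin (-f)
  · obtain ⟨s, hs, t, ht, e⟩ := h
    exact M.mem_of_mul_eq_one_add hM ht hs (by linear_combination e)
  · obtain ⟨Q, hMQ, hQ⟩ := (M.adjoin (-f)).exists_le_maximal h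
    obtain ⟨φ, hφ⟩ := exists_algHom_nonneg_of_maximal hQ ((hM.mono (M.le_adjoin _)).mono hMQ)
    have hneg := hφ (-f) (hMQ (M.mem_adjoin_self _))
    have hpos := hf φ fun p hp => hφ p (hMQ (M.le_adjoin _ hp))
    rw [map_neg] at hneg
    linarith

end RealAlgebra

end QuadraticModule

/-! ### The quadratic module `QM(A, B)` -/

theorem isSOS_of_isSumSq {d : ℕ} {p : MvPolynomial (Fin d ⊕ Fin d) ℝ} (hp : IsSumSq p) :
    IsSOS p := by
  induction hp with
  | zero => exact ⟨0, Fin.elim0, by simp⟩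
  | sq_add a _ ih =>
    obtain ⟨n, h, rfl⟩ := ih
    exact ⟨n + 1, Fin.cons a h, by simp [Fin.sum_univ_succ, sq]⟩

section Containment

variable {d k l : ℕ} (a : Fin k → ℝ) (A : Fin k → Fin d → ℝ) (b : Fin l → Fin d → ℝ)

/-- `QM(A, B)`, with `x = X ∘ Sum.inl` and `z = X ∘ Sum.inr`. -/
noncomputable def containmentModule : QuadraticModule (MvPolynomial (Fin d ⊕ Fin d) ℝ) :=
  .generated (Sum.elim (fun i => C (a i) - ∑ j, C (A i j) * X (Sum.inl j))
    (fun j => 1 - ∑ i, C (b j i) * X (Sum.inr i)))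

theorem containmentModule_isArchimedean (hA : ∀ y, (∀ i, A i ⬝ᵥ y ≤ 0) → y = 0)
    (hb : ∀ y, (∀ j, b j ⬝ᵥ y ≤ 0) → y = 0) : (containmentModule a A b).IsArchimedean := by
  refine QuadraticModule.isArchimedean_of_adjoin_eq_top _ MvPolynomial.adjoin_range_X ?_
  rintro _ ⟨u | u, rfl⟩
  · refine QuadraticModule.exists_bounds_of_affine_mem _ (x := fun j => X (Sum.inl j))
      (a := a) (fun i => ?_) hA u
    rw [containmentModule]
    convert QuadraticModule.generator_mem _ (Sum.inl i) using 1
    simp [MvPolynomial.algebraMap_eq, C_mul']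
  · refine QuadraticModule.exists_bounds_of_affine_mem _ (x := fun j => X (Sum.inr j))
      (a := fun _ => 1) (fun i => ?_) hb u
    rw [containmentModule]
    convert QuadraticModule.generator_mem _ (Sum.inr i) using 1
    simp [C_mul']

theorem feasible_of_algHom_nonneg {φ : MvPolynomial (Fin d ⊕ Fin d) ℝ →ₐ[ℝ] ℝ}
    (hφ : ∀ p ∈ containmentModule a A b, 0 ≤ φ p) :
    (∀ i, 0 ≤ a i - A i ⬝ᵥ fun j => φ (X (Sum.inl j))) ∧
      ∀ j, b j ⬝ᵥ (fun i => φ (X (Sum.inr i))) ≤ 1 := by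
  refine ⟨fun i => ?_, fun j => ?_⟩
  · simpa [dotProduct] using hφ _ (QuadraticModule.generator_mem _ (Sum.inl i))
  · simpa [dotProduct] using hφ _ (QuadraticModule.generator_mem _ (Sum.inr j))

theorem exists_isSOS_of_mem_containmentModule {p : MvPolynomial (Fin d ⊕ Fin d) ℝ}
    (hp : p ∈ containmentModule a A b) :
    ∃ (σ₀ : MvPolynomial (Fin d ⊕ Fin d) ℝ) (σ : Fin k → MvPolynomial (Fin d ⊕ Fin d) ℝ)
      (τ : Fin l → MvPolynomial (Fin d ⊕ Fin d) ℝ),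
      IsSOS σ₀ ∧ (∀ i, IsSOS (σ i)) ∧ (∀ j, IsSOS (τ j)) ∧
      p = σ₀ + ∑ i : Fin k, σ i * (C (a i) - ∑ j : Fin d, C (A i j) * X (Sum.inl j))
        + ∑ j : Fin l, τ j * (1 - ∑ i : Fin d, C (b j i) * X (Sum.inr i)) := by
  obtain ⟨σ₀, σ, h₀, h, rfl⟩ := hp
  refine ⟨σ₀, fun i => σ (Sum.inl i), fun j => σ (Sum.inr j), isSOS_of_isSumSq h₀,
    fun i => isSOS_of_isSumSq (h _), fun j => isSOS_of_isSumSq (h _), ?_⟩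
  rw [Fintype.sum_sum_type, add_assoc]
  rfl

end Containment

/-- if P is strongly contained in Q (P ⊆ Q and the boundaries are
disjoint), then some μ < 1 admits an sos representation of μ - xᵀz in the
quadratic module generated by the linear constraints of P × Q°; hence the
hierarchy certifies containment in finitely many steps. -/
theorem strong_containment_finite_certificate
    {d k l : ℕ} (a : Fin k → ℝ) (A : Fin k → Fin d → ℝ) (b : Fin l → Fin d → ℝ)
    (P : Set (Fin d → ℝ)) (hPdef : P = {x | ∀ i, 0 ≤ a i - A i ⬝ᵥ x})
    (hPne : P.Nonempty) (hPbd : Bornology.IsBounded P)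
    (Q : Set (Fin d → ℝ)) (hQdef : Q = convexHull ℝ (Set.range b))
    (hQ0 : (0 : Fin d → ℝ) ∈ interior Q)
    (hPQ : P ⊆ Q) (hbd : frontier P ∩ frontier Q = ∅) :
    ∃ μ : ℝ, μ < 1 ∧
      ∃ (σ₀ : MvPolynomial (Fin d ⊕ Fin d) ℝ)
        (σ : Fin k → MvPolynomial (Fin d ⊕ Fin d) ℝ)
        (τ : Fin l → MvPolynomial (Fin d ⊕ Fin d) ℝ),
        IsSOS σ₀ ∧ (∀ i, IsSOS (σ i)) ∧ (∀ j, IsSOS (τ j)) ∧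
        C μ - ∑ i : Fin d, X (Sum.inl i) * X (Sum.inr i) =
          σ₀ + ∑ i : Fin k, σ i * (C (a i) - ∑ j : Fin d, C (A i j) * X (Sum.inl j))
             + ∑ j : Fin l, τ j * (1 - ∑ i : Fin d, C (b j i) * X (Sum.inr i)) := by
  subst hPdef hQdef
  have hQnhds := mem_interior_iff_mem_nhds.mp hQ0
  obtain ⟨ρ, hρ, hPρ⟩ := (Metric.isCompact_of_isClosed_isBounded
    (isClosed_setOf_forall_le_sub_dotProduct a A) hPbd).exists_gauge_le_lt_one
    (convex_convexHull ℝ _) hQnhds (subset_interior_of_frontier_inter_frontier_eq_empty hPQ hbd)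
  have harch := containmentModule_isArchimedean a A b
    (fun _ => eq_zero_of_forall_dotProduct_nonpos_of_isBounded hPne hPbd)
    (fun _ => eq_zero_of_forall_dotProduct_nonpos hQnhds)
  refine ⟨(1 + ρ) / 2, by linarith, exists_isSOS_of_mem_containmentModule a A b ?_⟩
  refine QuadraticModule.mem_of_forall_algHom_pos _ harch fun φ hφ => ?_
  set x : Fin d → ℝ := fun j => φ (X (Sum.inl j))
  set z : Fin d → ℝ := fun i => φ (X (Sum.inr i))
  obtain ⟨hx, hz⟩ := feasible_of_algHom_nonneg a A b hφ
  have hxz := dotProduct_le_gauge (absorbent_nhds_zero hQnhds)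
    (fun q hq => dotProduct_le_of_mem_convexHull hz hq) x
  have : φ (C ((1 + ρ) / 2) - ∑ i, X (Sum.inl i) * X (Sum.inr i)) = (1 + ρ) / 2 - x ⬝ᵥ z := by
    simp [x, z, dotProduct]
  linarith [hPρ x hx]
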